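/- Under the hypotheses of the preceding theorem, the Heisenberg-type relation holds: [∑_{i=1}^n (ΔA_i)²]^{1/2} [∑_{j=1}^m (ΔB_j)²]^{1/2} ≥ (1/(2σ_max(G))) ∑_{i,j} |⟨[A_i,B_j]⟩|. -/

import Mathlib

open Matrix BigOperators
open scoped ComplexOrder

noncomputable def qMean {d : ℕ} (ρ A : Matrix (Fin d) (Fin d) ℂ) : ℂ := (ρ * A).trace

noncomputable def qVar {d : ℕ} (ρ A : Matrix (Fin d) (Fin d) ℂ) : ℝ :=
  ((ρ * (A * A)).trace - (ρ * A).trace ^ 2).re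

noncomputable def qDev {d : ℕ} (ρ A : Matrix (Fin d) (Fin d) ℂ) : ℝ :=
  Real.sqrt (qVar ρ A)

noncomputable def lambdaMax {n : ℕ} (M : Matrix (Fin n) (Fin n) ℂ) : ℝ :=
  sSup {r : ℝ | Module.End.HasEigenvalue (Matrix.toLin' M) (r : ℂ)}

noncomputable def lambdaMaxR {n : ℕ} (M : Matrix (Fin n) (Fin n) ℝ) : ℝ :=
  sSup {r : ℝ | Module.End.HasEigenvalue (Matrix.toLin' M) r}

noncomputable def sigmaMax {n m : ℕ} (G : Matrix (Fin n) (Fin m) ℝ) : ℝ :=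
  Real.sqrt (lambdaMaxR (Gᵀ * G))

/-- The square root of a positive semidefinite matrix, as defined in the older Mathlib
(`Matrix.PosSemidef.sqrt`, since removed). -/
noncomputable def Matrix.PosSemidef.sqrt {n : Type*} [Fintype n] [DecidableEq n] {𝕜 : Type*} [RCLike 𝕜]
    {A : Matrix n n 𝕜} (hA : A.PosSemidef) : Matrix n n 𝕜 :=
  hA.1.eigenvectorUnitary.1 * diagonal ((↑) ∘ (√·) ∘ hA.1.eigenvalues) *
    (star hA.1.eigenvectorUnitary : Matrix n n 𝕜)

lemma aux_sqrt_herm {d : ℕ} {ρ : Matrix (Fin d) (Fin d) ℂ} (hρ : ρ.PosSemidef) :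
    hρ.sqrtᴴ = hρ.sqrt := by
  have hD : (diagonal (RCLike.ofReal ∘ (√·) ∘ hρ.1.eigenvalues) : Matrix (Fin d) (Fin d) ℂ)ᴴ
      = diagonal (RCLike.ofReal ∘ (√·) ∘ hρ.1.eigenvalues) := by
    rw [Matrix.diagonal_conjTranspose]; congr 1; ext i; simp
  rw [Matrix.PosSemidef.sqrt, Matrix.conjTranspose_mul, Matrix.conjTranspose_mul, hD,
    Matrix.star_eq_conjTranspose, Matrix.conjTranspose_conjTranspose,
    Matrix.mul_assoc]
lemma aux_sqrt_mul_self {d : ℕ} {ρ : Matrix (Fin d) (Fin d) ℂ} (hρ : ρ.PosSemidef) :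
    hρ.sqrt * hρ.sqrt = ρ := by
  conv_rhs => rw [hρ.1.spectral_theorem, Unitary.conjStarAlgAut_apply]
  have hU := Unitary.coe_star_mul_self hρ.1.eigenvectorUnitary
  rw [Matrix.PosSemidef.sqrt, show ∀ a b c e f g : Matrix (Fin d) (Fin d) ℂ,
    a * b * c * (e * f * g) = a * b * (c * e) * f * g from fun _ _ _ _ _ _ => by
      simp only [Matrix.mul_assoc], hU, Matrix.mul_one,
    Matrix.mul_assoc _ (diagonal _) (diagonal _), Matrix.diagonal_mul_diagonal]
  congr 3
  funext i
  simp only [Function.comp_apply]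
  rw [← RCLike.ofReal_mul, Real.mul_self_sqrt (hρ.eigenvalues_nonneg i)]
/-! ### Auxiliary linear algebra lemmas -/

lemma aux_eigset {n : ℕ} (M : Matrix (Fin n) (Fin n) ℝ) (hM : M.IsHermitian) :
    {r : ℝ | Module.End.HasEigenvalue (Matrix.toLin' M) r} = Set.range hM.eigenvalues := by
  have h1 : ∀ r : ℝ, Module.End.HasEigenvalue (Matrix.toLin' M) r ↔ r ∈ spectrum ℝ M := by
    intro r
    rw [Module.End.hasEigenvalue_iff_mem_spectrum]
    constructor
    · intro h
      rwa [← AlgEquiv.spectrum_eq (Matrix.toLinAlgEquiv (Pi.basisFun ℝ (Fin n))) M]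
    · intro h
      rwa [← AlgEquiv.spectrum_eq (Matrix.toLinAlgEquiv (Pi.basisFun ℝ (Fin n))) M] at h
  ext r
  rw [Set.mem_setOf_eq, h1, hM.spectrum_real_eq_range_eigenvalues]

lemma aux_eig_le_lambdaMax {n : ℕ} (M : Matrix (Fin n) (Fin n) ℝ) (hM : M.IsHermitian)
    (i : Fin n) : hM.eigenvalues i ≤ lambdaMaxR M := by
  rw [lambdaMaxR, aux_eigset M hM]
  exact le_csSup ((Set.finite_range _).bddAbove) (Set.mem_range_self i)

lemma aux_rayleigh {n : ℕ} [NeZero n] (M : Matrix (Fin n) (Fin n) ℝ) (hM : M.IsHermitian)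
    (v : Fin n → ℝ) : v ⬝ᵥ (M *ᵥ v) ≤ lambdaMaxR M * (v ⬝ᵥ v) := by
  classical
  set U : Matrix (Fin n) (Fin n) ℝ := (hM.eigenvectorUnitary : Matrix (Fin n) (Fin n) ℝ) with hU
  have hstar : star U = Uᵀ := by
    rw [Matrix.star_eq_conjTranspose, Matrix.conjTranspose_eq_transpose_of_trivial]
  set w : Fin n → ℝ := Uᵀ *ᵥ v with hw
  have hvw : v ⬝ᵥ v = w ⬝ᵥ w := by
    rw [hw, Matrix.dotProduct_mulVec (Uᵀ *ᵥ v) Uᵀ v, Matrix.vecMul_transpose,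
      Matrix.mulVec_mulVec]
    have : U * Uᵀ = 1 := by
      rw [← hstar]; exact Matrix.mem_unitaryGroup_iff.mp hM.eigenvectorUnitary.2
    rw [this, Matrix.one_mulVec]
  have hMv : v ⬝ᵥ (M *ᵥ v) = ∑ k, hM.eigenvalues k * (w k)^2 := by
    conv_lhs => rw [hM.spectral_theorem, Unitary.conjStarAlgAut_apply]
    rw [← hU, hstar, ← Matrix.mulVec_mulVec, ← Matrix.mulVec_mulVec,
      Matrix.dotProduct_mulVec v U, ← Matrix.mulVec_transpose, ← hw]
    simp only [dotProduct, Matrix.mulVec_diagonal]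
    apply Finset.sum_congr rfl
    intro k _
    simp [pow_two]
    ring
  rw [hMv, hvw]
  have : (w ⬝ᵥ w) = ∑ k, (w k)^2 := by simp [dotProduct, pow_two]
  rw [this, Finset.mul_sum]
  apply Finset.sum_le_sum
  intro k _
  exact mul_le_mul_of_nonneg_right (aux_eig_le_lambdaMax M hM k) (sq_nonneg _)

lemma aux_GtG_herm {n m : ℕ} (G : Matrix (Fin n) (Fin m) ℝ) : (Gᵀ * G).IsHermitian := by
  rw [← Matrix.conjTranspose_eq_transpose_of_trivial]
  exact Matrix.isHermitian_conjTranspose_mul_self G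

lemma aux_GtG_psd {n m : ℕ} (G : Matrix (Fin n) (Fin m) ℝ) : (Gᵀ * G).PosSemidef := by
  rw [← Matrix.conjTranspose_eq_transpose_of_trivial]
  exact Matrix.posSemidef_conjTranspose_mul_self G

lemma aux_lambdaMax_GtG_nonneg {n m : ℕ} [NeZero m] (G : Matrix (Fin n) (Fin m) ℝ) :
    0 ≤ lambdaMaxR (Gᵀ * G) := by
  refine le_trans ((aux_GtG_psd G).eigenvalues_nonneg (0 : Fin m)) ?_
  exact aux_eig_le_lambdaMax _ _ _

lemma aux_norm_mulVec_le {n m : ℕ} [NeZero m] (G : Matrix (Fin n) (Fin m) ℝ) (b : Fin m → ℝ) :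
    ∑ i, (G *ᵥ b) i ^ 2 ≤ lambdaMaxR (Gᵀ * G) * ∑ j, b j ^ 2 := by
  have h1 : ∑ i, (G *ᵥ b) i ^ 2 = b ⬝ᵥ ((Gᵀ * G) *ᵥ b) := by
    rw [← Matrix.mulVec_mulVec, Matrix.dotProduct_mulVec b Gᵀ, ← Matrix.mulVec_transpose,
      Matrix.transpose_transpose]
    simp [dotProduct, pow_two]
  have h2 : b ⬝ᵥ b = ∑ j, b j ^ 2 := by simp [dotProduct, pow_two]
  rw [h1, ← h2]
  exact aux_rayleigh _ (aux_GtG_herm G) b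

lemma aux_bilin_le {n m : ℕ} [NeZero m] (G : Matrix (Fin n) (Fin m) ℝ) (a : Fin n → ℝ)
    (b : Fin m → ℝ) :
    a ⬝ᵥ (G *ᵥ b) ≤ sigmaMax G * Real.sqrt (∑ i, a i ^ 2) * Real.sqrt (∑ j, b j ^ 2) := by
  have cs : (a ⬝ᵥ (G *ᵥ b)) ^ 2 ≤ (∑ i, a i ^ 2) * ∑ i, (G *ᵥ b) i ^ 2 := by
    simpa [dotProduct] using Finset.sum_mul_sq_le_sq_mul_sq Finset.univ a (G *ᵥ b)
  have h2 : (∑ i, a i ^ 2) * ∑ i, (G *ᵥ b) i ^ 2 ≤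
      (∑ i, a i ^ 2) * (lambdaMaxR (Gᵀ * G) * ∑ j, b j ^ 2) :=
    mul_le_mul_of_nonneg_left (aux_norm_mulVec_le G b) (Finset.sum_nonneg fun _ _ => sq_nonneg _)
  have ha : 0 ≤ ∑ i, a i ^ 2 := Finset.sum_nonneg fun _ _ => sq_nonneg _
  calc a ⬝ᵥ (G *ᵥ b) ≤ |a ⬝ᵥ (G *ᵥ b)| := le_abs_self _
    _ = Real.sqrt ((a ⬝ᵥ (G *ᵥ b)) ^ 2) := (Real.sqrt_sq_eq_abs _).symm
    _ ≤ Real.sqrt ((∑ i, a i ^ 2) * (lambdaMaxR (Gᵀ * G) * ∑ j, b j ^ 2)) :=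
        Real.sqrt_le_sqrt (cs.trans h2)
    _ = sigmaMax G * Real.sqrt (∑ i, a i ^ 2) * Real.sqrt (∑ j, b j ^ 2) := by
        rw [Real.sqrt_mul ha, Real.sqrt_mul (aux_lambdaMax_GtG_nonneg G), sigmaMax]
        ring

/-! ### Auxiliary quantum lemmas -/

lemma aux_qVar_pos {d : ℕ} {ρ A : Matrix (Fin d) (Fin d) ℂ} (h : qDev ρ A ≠ 0) :
    0 < qVar ρ A := by
  by_contra hc
  exact h (Real.sqrt_eq_zero'.mpr (le_of_not_gt hc))

lemma aux_qDev_pos {d : ℕ} {ρ A : Matrix (Fin d) (Fin d) ℂ} (h : qDev ρ A ≠ 0) :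
    0 < qDev ρ A := Real.sqrt_pos.mpr (aux_qVar_pos h)

lemma aux_qDev_sq {d : ℕ} {ρ A : Matrix (Fin d) (Fin d) ℂ} (h : qDev ρ A ≠ 0) :
    qDev ρ A ^ 2 = qVar ρ A := Real.sq_sqrt (aux_qVar_pos h).le

lemma aux_star_qMean {d : ℕ} {ρ A : Matrix (Fin d) (Fin d) ℂ} (hρ : ρ.IsHermitian)
    (hA : A.IsHermitian) : star (qMean ρ A) = qMean ρ A := by
  rw [qMean, ← Matrix.trace_conjTranspose, Matrix.conjTranspose_mul, hρ, hA,
    Matrix.trace_mul_comm]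

lemma aux_tilde_herm {d : ℕ} {ρ A : Matrix (Fin d) (Fin d) ℂ} (hρ : ρ.IsHermitian)
    (hA : A.IsHermitian) : (A - qMean ρ A • 1).IsHermitian := by
  rw [Matrix.IsHermitian, Matrix.conjTranspose_sub, hA, Matrix.conjTranspose_smul,
    Matrix.conjTranspose_one, aux_star_qMean hρ hA]

lemma aux_trace_XY {d : ℕ} {ρ : Matrix (Fin d) (Fin d) ℂ} (hρ : ρ.PosSemidef)
    (At Bt : Matrix (Fin d) (Fin d) ℂ) (hAt : At.IsHermitian) (cA cB : ℝ) :
    (((cA : ℂ) • (At * hρ.sqrt))ᴴ * ((cB : ℂ) • (Bt * hρ.sqrt))).trace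
      = (cA * cB : ℂ) * (ρ * (At * Bt)).trace := by
  have hs : hρ.sqrtᴴ = hρ.sqrt := aux_sqrt_herm hρ
  rw [Matrix.conjTranspose_smul, Matrix.conjTranspose_mul, hs, hAt]
  rw [Matrix.smul_mul, Matrix.mul_smul, smul_smul, Matrix.trace_smul]
  congr 1
  · simp [Complex.ext_iff]
  · rw [show hρ.sqrt * At * (Bt * hρ.sqrt) = hρ.sqrt * (At * Bt * hρ.sqrt) by simp [mul_assoc],
      Matrix.trace_mul_comm, mul_assoc, aux_sqrt_mul_self hρ, Matrix.trace_mul_comm]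

lemma aux_comm_tilde {d : ℕ} (ρ A B : Matrix (Fin d) (Fin d) ℂ) :
    (A - qMean ρ A • 1) * (B - qMean ρ B • 1) - (B - qMean ρ B • 1) * (A - qMean ρ A • 1)
      = A * B - B * A := by
  simp only [sub_mul, mul_sub, Matrix.smul_mul, Matrix.mul_smul, smul_smul, one_mul, mul_one]
  rw [mul_comm (qMean ρ B) (qMean ρ A)]
  abel

lemma aux_trace_rho_BA {d : ℕ} {ρ A B : Matrix (Fin d) (Fin d) ℂ} (hρ : ρ.IsHermitian)
    (hA : A.IsHermitian) (hB : B.IsHermitian) :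
    (ρ * (B * A)).trace = star ((ρ * (A * B)).trace) := by
  rw [← Matrix.trace_conjTranspose, Matrix.conjTranspose_mul, Matrix.conjTranspose_mul,
    hρ, hA, hB]
  exact (Matrix.trace_mul_comm (B * A) ρ).symm

lemma aux_abs_sub_star_le {z : ℂ} : ‖z - star z‖ ≤ 2 * ‖z‖ := by
  calc ‖z - star z‖ ≤ ‖z‖ + ‖star z‖ :=
        (norm_sub_le z (star z))
    _ = 2 * ‖z‖ := by
        rw [norm_star]; ring

theorem stmt10 {d n m : ℕ} (ρ : Matrix (Fin d) (Fin d) ℂ) (hρ : ρ.PosSemidef)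
    (hρ1 : ρ.trace = 1)
    (A : Fin n → Matrix (Fin d) (Fin d) ℂ) (B : Fin m → Matrix (Fin d) (Fin d) ℂ)
    (hA : ∀ i, (A i).IsHermitian) (hB : ∀ j, (B j).IsHermitian)
    (hΔA : ∀ i, qDev ρ (A i) ≠ 0) (hΔB : ∀ j, qDev ρ (B j) ≠ 0)
    (X : Fin n → Matrix (Fin d) (Fin d) ℂ) (Y : Fin m → Matrix (Fin d) (Fin d) ℂ)
    (hX : ∀ i, X i = ((qDev ρ (A i) : ℂ))⁻¹ • ((A i - qMean ρ (A i) • 1) * hρ.sqrt))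
    (hY : ∀ j, Y j = ((qDev ρ (B j) : ℂ))⁻¹ • ((B j - qMean ρ (B j) • 1) * hρ.sqrt))
    (G : Matrix (Fin n) (Fin m) ℝ)
    (hG : ∀ i j, G i j = ‖((X i)ᴴ * Y j).trace‖)
    (hcov : ∃ i j, qMean ρ ((A i - qMean ρ (A i) • 1) * (B j - qMean ρ (B j) • 1)) ≠ 0) :
    Real.sqrt (∑ i, qVar ρ (A i)) * Real.sqrt (∑ j, qVar ρ (B j)) ≥
      (2 * sigmaMax G)⁻¹ * ∑ i, ∑ j, ‖qMean ρ (A i * B j - B j * A i)‖ := by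
  classical
  obtain ⟨i₀, j₀, hcov⟩ := hcov
  haveI : NeZero m := ⟨j₀.pos.ne'⟩
  haveI : NeZero n := ⟨i₀.pos.ne'⟩
  set a : Fin n → ℝ := fun i => qDev ρ (A i) with ha
  set b : Fin m → ℝ := fun j => qDev ρ (B j) with hb
  have hapos : ∀ i, 0 < a i := fun i => aux_qDev_pos (hΔA i)
  have hbpos : ∀ j, 0 < b j := fun j => aux_qDev_pos (hΔB j)
  set T : Fin n → Fin m → ℂ :=
    fun i j => (ρ * ((A i - qMean ρ (A i) • 1) * (B j - qMean ρ (B j) • 1))).trace with hT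
  -- G values
  have hGval : ∀ i j, a i * b j * G i j = ‖T i j‖ := by
    intro i j
    have hx : X i = (((a i)⁻¹ : ℝ) : ℂ) • ((A i - qMean ρ (A i) • 1) * hρ.sqrt) := by
      rw [hX i]; push_cast; ring_nf; rfl
    have hy : Y j = (((b j)⁻¹ : ℝ) : ℂ) • ((B j - qMean ρ (B j) • 1) * hρ.sqrt) := by
      rw [hY j]; push_cast; ring_nf; rfl
    rw [hG i j, hx, hy,
      aux_trace_XY hρ _ _ (aux_tilde_herm hρ.isHermitian (hA i)) ((a i)⁻¹) ((b j)⁻¹)]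
    simp only [hT]
    rw [norm_mul, norm_mul, Complex.norm_real, Complex.norm_real, Real.norm_eq_abs, Real.norm_eq_abs,
      abs_of_nonneg (inv_nonneg.mpr (hapos i).le), abs_of_nonneg (inv_nonneg.mpr (hbpos j).le)]
    field_simp
    exact mul_div_cancel_left₀ _ (mul_pos (hapos i) (hbpos j)).ne'
  -- commutator bound
  have habs : ∀ i j, ‖qMean ρ (A i * B j - B j * A i)‖
      ≤ 2 * (a i * b j * G i j) := by
    intro i j
    have hcomm : qMean ρ (A i * B j - B j * A i) = T i j - star (T i j) := by
      rw [← aux_comm_tilde ρ (A i) (B j), qMean, mul_sub, Matrix.trace_sub, hT]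
      congr 1
      exact aux_trace_rho_BA hρ.isHermitian (aux_tilde_herm hρ.isHermitian (hA i))
        (aux_tilde_herm hρ.isHermitian (hB j))
    rw [hcomm, hGval i j]
    exact aux_abs_sub_star_le
  -- positivity of sigmaMax
  have hGnn : ∀ i j, 0 ≤ G i j := fun i j => by rw [hG i j]; exact norm_nonneg _
  have hG0 : 0 < G i₀ j₀ := by
    rcases (hGnn i₀ j₀).lt_or_eq with h | h
    · exact h
    · exfalso
      apply hcov
      have := hGval i₀ j₀
      rw [← h, mul_zero] at this
      have h0 : T i₀ j₀ = 0 := by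
        have := this.symm
        rwa [norm_eq_zero] at this
      exact h0
  have hlpos : 0 < lambdaMaxR (Gᵀ * G) := by
    have h1 : (Pi.single j₀ 1 : Fin m → ℝ) ⬝ᵥ ((Gᵀ * G) *ᵥ (Pi.single j₀ 1 : Fin m → ℝ))
        = (Gᵀ * G) j₀ j₀ := by
      simp [Matrix.mulVec_single, dotProduct, Pi.single_apply]
    have h2 : (Pi.single j₀ 1 : Fin m → ℝ) ⬝ᵥ (Pi.single j₀ 1 : Fin m → ℝ) = 1 := by
      simp [dotProduct, Pi.single_apply]
    have h3 := aux_rayleigh (Gᵀ * G) (aux_GtG_herm G) (Pi.single j₀ 1)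
    rw [h1, h2, mul_one] at h3
    have h4 : 0 < (Gᵀ * G) j₀ j₀ := by
      have : (Gᵀ * G) j₀ j₀ = ∑ i, G i j₀ ^ 2 := by
        simp [Matrix.mul_apply, Matrix.transpose_apply, pow_two]
      rw [this]
      exact Finset.sum_pos' (fun i _ => sq_nonneg _)
        ⟨i₀, Finset.mem_univ _, by positivity⟩
    exact h4.trans_le h3
  have hσ : 0 < sigmaMax G := Real.sqrt_pos.mpr hlpos
  -- main chain
  have hsum : ∑ i, ∑ j, ‖qMean ρ (A i * B j - B j * A i)‖
      ≤ 2 * (a ⬝ᵥ (G *ᵥ b)) := by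
    have : a ⬝ᵥ (G *ᵥ b) = ∑ i, ∑ j, a i * b j * G i j := by
      simp only [dotProduct, Matrix.mulVec, Finset.mul_sum]
      apply Finset.sum_congr rfl; intro i _
      apply Finset.sum_congr rfl; intro j _
      ring
    rw [this, Finset.mul_sum]
    apply Finset.sum_le_sum
    intro i _
    rw [Finset.mul_sum]
    exact Finset.sum_le_sum fun j _ => habs i j
  have hbil := aux_bilin_le G a b
  have hvarA : Real.sqrt (∑ i, qVar ρ (A i)) = Real.sqrt (∑ i, a i ^ 2) := by
    congr 1
    exact Finset.sum_congr rfl fun i _ => (aux_qDev_sq (hΔA i)).symm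
  have hvarB : Real.sqrt (∑ j, qVar ρ (B j)) = Real.sqrt (∑ j, b j ^ 2) := by
    congr 1
    exact Finset.sum_congr rfl fun j _ => (aux_qDev_sq (hΔB j)).symm
  rw [ge_iff_le, hvarA, hvarB, inv_mul_le_iff₀ (by positivity)]
  calc ∑ i, ∑ j, ‖qMean ρ (A i * B j - B j * A i)‖
      ≤ 2 * (a ⬝ᵥ (G *ᵥ b)) := hsum
    _ ≤ 2 * (sigmaMax G * Real.sqrt (∑ i, a i ^ 2) * Real.sqrt (∑ j, b j ^ 2)) := by
        linarith [hbil]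
    _ = 2 * sigmaMax G * (Real.sqrt (∑ i, a i ^ 2) * Real.sqrt (∑ j, b j ^ 2)) := by ring
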